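/- For every nonnegative integer r and all integers n1, n2, n3, m, the Kloosterman-twisted triple Gauss sum satisfies |T(2^r; n1, n2, n3, m)| ≤ 2^{2 + 5r/2}. -/

import Mathlib

/-- `e z = exp(2 π i z)`. -/
noncomputable def e (z : ℂ) : ℂ := Complex.exp (2 * Real.pi * Complex.I * z)
/-- Quadratic Gauss sum with linear twist: `S(q,a,n) = Σ_{x=1}^q e((a x² + n x)/q)`. -/
noncomputable def Sq (q : ℕ) (a n : ℤ) : ℂ :=
  ∑ x ∈ Finset.Icc 1 q, e (((a * (x : ℤ)^2 + n * x : ℤ) : ℂ) / (q : ℂ))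
/-- Kloosterman-twisted triple Gauss sum
`T(q;n1,n2,n3,m) = Σ_{a=1,(a,q)=1}^q S(q,a,n1)S(q,a,n2)S(q,a,n3) e(ā m/q)`. -/
noncomputable def Tq (q : ℕ) (n1 n2 n3 m : ℤ) : ℂ :=
  ∑ a ∈ (Finset.Icc 1 q).filter (fun a => Nat.Coprime a q),
    Sq q a n1 * Sq q a n2 * Sq q a n3 *
      e (((((a : ZMod q)⁻¹.val : ℤ) * m : ℤ) : ℂ) / (q : ℂ))


section Aux
open Complex Finset
variable {q : ℕ} [NeZero q]

lemma e_int_div (k : ℤ) : e ((k : ℂ) / q) = ZMod.stdAddChar (k : ZMod q) := by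
  rw [ZMod.stdAddChar_coe, e, mul_div_assoc]

lemma abs_std (z : ZMod q) : ‖ZMod.stdAddChar z‖ = 1 := by
  rw [ZMod.stdAddChar_apply]; exact Circle.norm_coe _

lemma conj_std (z : ZMod q) :
    (starRingEnd ℂ) (ZMod.stdAddChar z) = ZMod.stdAddChar (-z) := by
  have h1 : ZMod.stdAddChar z * ZMod.stdAddChar (-z) = 1 := by
    rw [← AddChar.map_add_eq_mul]; simp
  have h2 : (ZMod.stdAddChar z)⁻¹ = (starRingEnd ℂ) (ZMod.stdAddChar z) :=
    Complex.inv_eq_conj (abs_std z)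
  rw [← h2]
  exact (eq_inv_of_mul_eq_one_right h1).symm

example (a : ℕ) (h : Nat.Coprime a q) : IsUnit ((a : ℤ) : ZMod q) := by
  push_cast
  exact (ZMod.isUnit_iff_coprime a q).mpr h

example (H : ZMod q) : ((H.val : ℕ) : ZMod q) = H := ZMod.natCast_zmod_val H

example (k : ℕ) : ((k : ℕ) : ZMod q) = 0 ↔ q ∣ k := ZMod.natCast_eq_zero_iff k q


lemma Sq_eq (a n : ℤ) :
    Sq q a n = ∑ X : ZMod q, ZMod.stdAddChar ((a : ZMod q) * X^2 + (n : ZMod q) * X) := by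
  unfold Sq
  refine Finset.sum_nbij' (i := fun x => ((x : ℕ) : ZMod q))
    (j := fun Y => if Y = 0 then q else Y.val) ?_ ?_ ?_ ?_ ?_
  · intro x hx; exact Finset.mem_univ _
  · intro Y _
    by_cases hY : Y = 0
    · simp [hY, Finset.mem_Icc, Nat.one_le_iff_ne_zero, NeZero.ne q]
    · simp only [hY, if_false, Finset.mem_Icc]
      refine ⟨Nat.one_le_iff_ne_zero.mpr ?_, (ZMod.val_lt Y).le⟩
      intro h
      exact hY (by rw [← ZMod.natCast_zmod_val Y, h, Nat.cast_zero])
  · intro x hx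
    simp only [Finset.mem_Icc] at hx
    by_cases h : (x : ZMod q) = 0
    · rw [if_pos h]
      have h2 : q ∣ x := (ZMod.natCast_eq_zero_iff x q).mp h
      have h3 := Nat.le_of_dvd (by omega) h2
      omega
    · rw [if_neg h, ZMod.val_natCast_of_lt]
      rcases Nat.lt_or_ge x q with h' | h'
      · exact h'
      · exfalso; apply h
        have : x = q := le_antisymm hx.2 h'
        simp [this]
  · intro Y _
    by_cases hY : Y = 0 <;> simp [hY, ZMod.natCast_zmod_val]
  · intro x hx
    rw [e_int_div]
    congr 1
    push_cast
    ring

lemma sum_std_mul (c : ZMod q) :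
    ∑ y : ZMod q, ZMod.stdAddChar (c * y) = if c = 0 then (q : ℂ) else 0 := by
  classical
  have h := AddChar.sum_eq_ite ((ZMod.stdAddChar (N := q)).mulShift c)
  simp only [AddChar.mulShift_apply] at h
  rw [h]
  split_ifs with h1 h2 h2
  · simp [ZMod.card]
  · exact absurd (by rw [AddChar.one_eq_zero]; exact h1) (ZMod.isPrimitive_stdAddChar q h2)
  · exact absurd (by rw [h2, AddChar.mulShift_zero, AddChar.one_eq_zero]) h1
  · rfl

lemma key_eq (α ν : ZMod q) :
    (Complex.normSq (∑ X : ZMod q, ZMod.stdAddChar (α * X^2 + ν * X)) : ℂ)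
      = ∑ H ∈ Finset.univ.filter (fun H : ZMod q => 2 * α * H = 0),
          ZMod.stdAddChar (α * H^2 + ν * H) * (q : ℂ) := by
  classical
  set ψ := ZMod.stdAddChar (N := q)
  set f : ZMod q → ZMod q := fun X => α * X^2 + ν * X with hf
  have conj_sum : (starRingEnd ℂ) (∑ Y : ZMod q, ψ (f Y)) = ∑ Y : ZMod q, ψ (-(f Y)) := by
    rw [map_sum]; exact Finset.sum_congr rfl fun Y _ => conj_std _
  rw [← Complex.mul_conj, conj_sum, Finset.sum_mul_sum]
  have step1 : ∀ X Y : ZMod q, ψ (f X) * ψ (-(f Y)) = ψ (f X - f Y) := by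
    intro X Y; rw [← AddChar.map_add_eq_mul]; ring_nf
  calc ∑ X : ZMod q, ∑ Y : ZMod q, ψ (f X) * ψ (-(f Y))
      = ∑ Y : ZMod q, ∑ X : ZMod q, ψ (f X - f Y) := by
        rw [Finset.sum_comm]
        exact Finset.sum_congr rfl fun Y _ => Finset.sum_congr rfl fun X _ => step1 X Y
    _ = ∑ Y : ZMod q, ∑ H : ZMod q, ψ (α * H^2 + ν * H) * ψ ((2 * α * H) * Y) := by
        refine Finset.sum_congr rfl fun Y _ => ?_
        rw [← Equiv.sum_comp (Equiv.addRight Y) (fun X => ψ (f X - f Y))]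
        refine Finset.sum_congr rfl fun H _ => ?_
        rw [← AddChar.map_add_eq_mul]
        congr 1
        simp only [hf, Equiv.coe_addRight]
        ring
    _ = ∑ H : ZMod q, ψ (α * H^2 + ν * H) * ∑ Y : ZMod q, ψ ((2 * α * H) * Y) := by
        rw [Finset.sum_comm]
        exact Finset.sum_congr rfl fun H _ => (Finset.mul_sum _ _ _).symm
    _ = ∑ H ∈ Finset.univ.filter (fun H : ZMod q => 2 * α * H = 0),
          ψ (α * H^2 + ν * H) * (q : ℂ) := by
        rw [Finset.sum_filter]
        refine Finset.sum_congr rfl fun H _ => ?_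
        rw [sum_std_mul]
        split_ifs with h <;> simp

lemma card_two_torsion (r : ℕ) :
    (Finset.univ.filter (fun H : ZMod (2^r) => 2 * H = 0)).card ≤ 2 := by
  classical
  rcases r with _ | s
  · calc (Finset.univ.filter (fun H : ZMod (2^0) => 2 * H = 0)).card
        ≤ Finset.univ.card := Finset.card_filter_le _ _
      _ ≤ 2 := by simp
  · haveI : NeZero (2 ^ (s+1)) := ⟨pow_ne_zero _ two_ne_zero⟩
    have hmap : ∀ H ∈ Finset.univ.filter (fun H : ZMod (2^(s+1)) => 2 * H = 0),
        H.val ∈ ({0, 2^s} : Finset ℕ) := by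
      intro H hH
      simp only [Finset.mem_filter] at hH
      have h0 : ((2 * H.val : ℕ) : ZMod (2^(s+1))) = 0 := by
        push_cast [ZMod.natCast_zmod_val]
        exact hH.2
      have hdvd : 2^(s+1) ∣ 2 * H.val := (ZMod.natCast_eq_zero_iff _ _).mp h0
      obtain ⟨k, hk⟩ := hdvd
      have hv : H.val = 2^s * k := by
        have h2 : 2 * (2^s * k) = 2 * H.val := by rw [hk]; ring
        omega
      have hlt : H.val < 2^(s+1) := ZMod.val_lt H
      have hk2 : k < 2 := by
        by_contra hk2
        push_neg at hk2
        have : 2^s * 2 ≤ 2^s * k := Nat.mul_le_mul_left _ hk2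
        have h2 : 2^(s+1) = 2^s * 2 := by ring
        omega
      interval_cases k
      · simp [hv]
      · simp [hv]
    have hinj : Set.InjOn (fun H : ZMod (2^(s+1)) => H.val)
        (Finset.univ.filter (fun H : ZMod (2^(s+1)) => 2 * H = 0)) := by
      intro a _ b _ hab
      exact ZMod.val_injective _ hab
    calc (Finset.univ.filter (fun H : ZMod (2^(s+1)) => 2 * H = 0)).card
        ≤ ({0, 2^s} : Finset ℕ).card := Finset.card_le_card_of_injOn _ hmap hinj
      _ ≤ 2 := Finset.card_insert_le _ _ |>.trans (by simp)

lemma Sq_abs_le (r : ℕ) (a n : ℤ) (ha : IsUnit ((a : ZMod (2^r)))) :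
    ‖Sq (2^r) a n‖ ≤ Real.sqrt (2 * 2^r) := by
  haveI : NeZero (2 ^ r) := ⟨pow_ne_zero _ two_ne_zero⟩
  set q : ℕ := 2^r with hq
  rw [Sq_eq]
  set S := ∑ X : ZMod q, ZMod.stdAddChar ((a : ZMod q) * X^2 + (n : ZMod q) * X) with hS
  have hfilter : (Finset.univ.filter (fun H : ZMod q => 2 * (a : ZMod q) * H = 0))
      = Finset.univ.filter (fun H : ZMod q => 2 * H = 0) := by
    refine Finset.filter_congr fun H _ => ?_
    constructor
    · intro h
      have : (a : ZMod q) * (2 * H) = 0 := by rw [← h]; ring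
      exact (ha.mul_right_eq_zero).mp this
    · intro h
      have : 2 * (a : ZMod q) * H = (a : ZMod q) * (2 * H) := by ring
      rw [this, h, mul_zero]
  have hns : Complex.normSq S ≤ 2 * q := by
    have h1 := key_eq (q := q) (a : ZMod q) (n : ZMod q)
    rw [hfilter] at h1
    have h2 : Complex.normSq S = ‖(Complex.normSq S : ℂ)‖ := by
      rw [Complex.norm_of_nonneg (Complex.normSq_nonneg S)]
    rw [h2, h1]
    calc ‖∑ H ∈ Finset.univ.filter (fun H : ZMod q => 2 * H = 0),
            ZMod.stdAddChar ((a : ZMod q) * H^2 + (n : ZMod q) * H) * (q : ℂ)‖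
        ≤ ∑ H ∈ Finset.univ.filter (fun H : ZMod q => 2 * H = 0),
            ‖ZMod.stdAddChar ((a : ZMod q) * H^2 + (n : ZMod q) * H) * (q : ℂ)‖ :=
          norm_sum_le _ _
      _ = ∑ H ∈ Finset.univ.filter (fun H : ZMod q => 2 * H = 0), (q : ℝ) := by
          refine Finset.sum_congr rfl fun H _ => ?_
          rw [norm_mul, abs_std, one_mul, Complex.norm_natCast]
      _ = (Finset.univ.filter (fun H : ZMod q => 2 * H = 0)).card * (q : ℝ) := by
          rw [Finset.sum_const, nsmul_eq_mul]
      _ ≤ 2 * (q : ℝ) := by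
          have := card_two_torsion r
          have hqnn : (0:ℝ) ≤ (q:ℝ) := Nat.cast_nonneg _
          exact mul_le_mul_of_nonneg_right (by exact_mod_cast this) hqnn
  rw [show ‖S‖ = Real.sqrt (Complex.normSq S) from Complex.norm_def S]
  apply Real.sqrt_le_sqrt
  calc Complex.normSq S ≤ 2 * (q:ℝ) := hns
    _ = 2 * (2:ℝ)^r := by norm_num [hq]


end Aux

theorem T_two_power_bound (r : ℕ) (n1 n2 n3 m : ℤ) :
    ‖Tq (2 ^ r) n1 n2 n3 m‖ ≤ (2 : ℝ) ^ ((2 : ℝ) + 5 * (r : ℝ) / 2) := by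
  haveI : NeZero (2 ^ r) := ⟨pow_ne_zero _ two_ne_zero⟩
  set q : ℕ := 2^r with hq
  have hB : (0:ℝ) ≤ Real.sqrt (2 * 2^r) := Real.sqrt_nonneg _
  have hterm : ∀ a ∈ (Finset.Icc 1 q).filter (fun a => Nat.Coprime a q),
      ‖Sq q a n1 * Sq q a n2 * Sq q a n3 *
        e (((((a : ZMod q)⁻¹.val : ℤ) * m : ℤ) : ℂ) / (q : ℂ))‖
        ≤ Real.sqrt (2 * 2^r) ^ 3 := by
    intro a ha
    simp only [Finset.mem_filter] at ha
    have hu : IsUnit (((a : ℤ) : ZMod q)) := by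
      push_cast
      exact (ZMod.isUnit_iff_coprime a q).mpr ha.2
    have h1 := Sq_abs_le r a n1 hu
    have h2 := Sq_abs_le r a n2 hu
    have h3 := Sq_abs_le r a n3 hu
    have he : ‖e (((((a : ZMod q)⁻¹.val : ℤ) * m : ℤ) : ℂ) / (q : ℂ))‖ = 1 := by
      rw [e_int_div, abs_std]
    rw [norm_mul, norm_mul, norm_mul, he, mul_one]
    calc ‖Sq q a n1‖ * ‖Sq q a n2‖ * ‖Sq q a n3‖
        ≤ Real.sqrt (2 * 2^r) * Real.sqrt (2 * 2^r) * Real.sqrt (2 * 2^r) := by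
          gcongr
      _ = Real.sqrt (2 * 2^r) ^ 3 := by ring
  have hsum : ‖Tq q n1 n2 n3 m‖
      ≤ ((Finset.Icc 1 q).filter (fun a => Nat.Coprime a q)).card * Real.sqrt (2 * 2^r) ^ 3 := by
    unfold Tq
    calc ‖∑ a ∈ (Finset.Icc 1 q).filter (fun a => Nat.Coprime a q),
            Sq q a n1 * Sq q a n2 * Sq q a n3 *
              e (((((a : ZMod q)⁻¹.val : ℤ) * m : ℤ) : ℂ) / (q : ℂ))‖
        ≤ ∑ a ∈ (Finset.Icc 1 q).filter (fun a => Nat.Coprime a q),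
            ‖Sq q a n1 * Sq q a n2 * Sq q a n3 *
              e (((((a : ZMod q)⁻¹.val : ℤ) * m : ℤ) : ℂ) / (q : ℂ))‖ := norm_sum_le _ _
      _ ≤ ∑ _a ∈ (Finset.Icc 1 q).filter (fun a => Nat.Coprime a q), Real.sqrt (2 * 2^r) ^ 3 :=
          Finset.sum_le_sum hterm
      _ = _ := by rw [Finset.sum_const, nsmul_eq_mul]
  have hcard : (((Finset.Icc 1 q).filter (fun a => Nat.Coprime a q)).card : ℝ) ≤ (2:ℝ)^(r:ℝ) := by
    have h1 : ((Finset.Icc 1 q).filter (fun a => Nat.Coprime a q)).card ≤ q := by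
      calc _ ≤ (Finset.Icc 1 q).card := Finset.card_filter_le _ _
        _ = q := by simp
    calc (((Finset.Icc 1 q).filter (fun a => Nat.Coprime a q)).card : ℝ) ≤ (q : ℝ) := by
          exact_mod_cast h1
      _ = (2:ℝ)^(r:ℝ) := by
          rw [Real.rpow_natCast]; norm_num [hq]
  have hsqrt : Real.sqrt (2 * 2^r) = (2:ℝ) ^ (((r:ℝ) + 1)/2) := by
    have h2 : (2:ℝ) * 2^r = (2:ℝ) ^ ((r:ℝ) + 1) := by
      rw [Real.rpow_add (by norm_num), Real.rpow_one, Real.rpow_natCast]; ring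
    rw [h2, Real.sqrt_eq_rpow, ← Real.rpow_mul (by norm_num)]
    congr 1
    ring
  calc ‖Tq q n1 n2 n3 m‖
      ≤ ((Finset.Icc 1 q).filter (fun a => Nat.Coprime a q)).card * Real.sqrt (2 * 2^r) ^ 3 :=
        hsum
    _ ≤ (2:ℝ)^(r:ℝ) * ((2:ℝ) ^ (((r:ℝ) + 1)/2)) ^ 3 := by
        rw [hsqrt]
        exact mul_le_mul_of_nonneg_right hcard (by positivity)
    _ = (2:ℝ) ^ ((r:ℝ) + 3 * (((r:ℝ) + 1)/2)) := by
        rw [← Real.rpow_natCast ((2:ℝ) ^ (((r:ℝ) + 1)/2)) 3, ← Real.rpow_mul (by norm_num),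
          ← Real.rpow_add (by norm_num)]
        norm_num
        ring_nf
    _ ≤ (2 : ℝ) ^ ((2 : ℝ) + 5 * (r : ℝ) / 2) := by
        apply Real.rpow_le_rpow_of_exponent_le (by norm_num)
        linarith
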